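/- arXiv:0707.0226 — 2 statements merged into one kernel-verified Lean document; each statement's English description precedes it below -/
import Mathlib

section
/- If a finite graph G has no isolated vertices, then its domination number satisfies γ(G) ≤ ⌊|V(G)|/2⌋. (Ore's theorem) -/
open SimpleGraph

/-- The domination number of a graph: the least size of a dominating set. -/
noncomputable def SimpleGraph.dominationNumber {V : Type*} (G : SimpleGraph V) : ℕ :=
  sInf {n | ∃ s : Set V, s.ncard = n ∧ ∀ v, v ∈ s ∨ ∃ u ∈ s, G.Adj u v}

/-!
Take a dominating set `D` of minimum size. If some `v ∈ D` had no neighbour outside `D`, then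
`D \ {v}` would still dominate: `v` itself is dominated by any of its neighbours (which all lie
in `D \ {v}`), and nothing else needed `v`. So every vertex of `D` has a neighbour in `Dᶜ`, i.e.
`Dᶜ` is dominating too, and the smaller of `D` and `Dᶜ` has at most `|V| / 2` vertices.
-/

namespace SimpleGraph

variable {V : Type*} {G : SimpleGraph V} {s : Set V}

def IsDominating (G : SimpleGraph V) (s : Set V) : Prop :=
  ∀ v, v ∈ s ∨ ∃ u ∈ s, G.Adj u v

lemma dominationNumber_le_ncard (hs : G.IsDominating s) : G.dominationNumber ≤ s.ncard :=
  Nat.sInf_le ⟨s, rfl, hs⟩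

lemma exists_isDominating_ncard_eq_dominationNumber (G : SimpleGraph V) :
    ∃ s, G.IsDominating s ∧ s.ncard = G.dominationNumber := by
  obtain ⟨s, hcard, hs⟩ :=
    Nat.sInf_mem (s := {n | ∃ s : Set V, s.ncard = n ∧ G.IsDominating s})
      ⟨_, Set.univ, rfl, fun v => Or.inl trivial⟩
  exact ⟨s, hs, hcard⟩

lemma IsDominating.diff_singleton {v w : V} (hs : G.IsDominating s) (hvw : G.Adj v w)
    (hnbr : ∀ u, G.Adj u v → u ∈ s) : G.IsDominating (s \ {v}) := by
  intro u
  by_cases huv : u = v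
  · subst huv
    exact Or.inr ⟨w, ⟨hnbr w hvw.symm, hvw.ne'⟩, hvw.symm⟩
  rcases hs u with hu | ⟨x, hx, hxu⟩
  · exact Or.inl ⟨hu, huv⟩
  by_cases hxv : x = v
  · subst hxv
    exact Or.inl ⟨hnbr u hxu.symm, huv⟩
  · exact Or.inr ⟨x, ⟨hx, hxv⟩, hxu⟩

lemma IsDominating.compl_of_minimal (hG : ∀ v, ∃ w, G.Adj v w) (hs : G.IsDominating s)
    (hmin : ∀ v ∈ s, ¬ G.IsDominating (s \ {v})) : G.IsDominating sᶜ := by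
  intro v
  by_cases hv : v ∈ s
  · by_contra hno
    obtain ⟨w, hvw⟩ := hG v
    exact hmin v hv <| hs.diff_singleton hvw fun u huv =>
      by_contra fun hu => hno (Or.inr ⟨u, hu, huv⟩)
  · exact Or.inl hv

lemma not_isDominating_diff_singleton_of_ncard_eq [Finite V] {v : V} (hv : v ∈ s)
    (hcard : s.ncard = G.dominationNumber) : ¬ G.IsDominating (s \ {v}) := fun hsv =>
  (Set.ncard_sdiff_singleton_lt_of_mem hv).not_ge (hcard ▸ dominationNumber_le_ncard hsv)

end SimpleGraph

/-- Ore's theorem: a graph with no isolated vertex has domination number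
at most half of its order. -/
theorem ore_domination {V : Type*} [Fintype V] (G : SimpleGraph V)
    (h : ∀ v : V, ∃ w, G.Adj v w) :
    G.dominationNumber ≤ Fintype.card V / 2 := by
  obtain ⟨D, hD, hcard⟩ := G.exists_isDominating_ncard_eq_dominationNumber
  have hDc : G.IsDominating Dᶜ :=
    hD.compl_of_minimal h fun _ hv => not_isDominating_diff_singleton_of_ncard_eq hv hcard
  have hle := dominationNumber_le_ncard hDc
  have hsum : D.ncard + Dᶜ.ncard = Fintype.card V := by
    rw [Set.ncard_add_ncard_compl, Nat.card_eq_fintype_card]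
  omega
end

section
/- Let G be a connected graph with perfect matching M and minimum degree at least 2, with |V(G)| > 4. Then there exist three distinct edges v1v2, v3v4, v5v6 of M such that v2v3 and v4v5 are edges of G. -/
/-!
Let `p` send each vertex to its partner in `M`. Pick an edge `yx` with `y ≠ p x` and put
`S = {x, p x, y, p y}`. If no three pairs are linked as required, every edge leaving `S`
produces such a linked triple (two cases, according to whether it leaves from the pair of `x`
or, symmetrically, from that of `y`). Hence `S` is closed under adjacency, so by connectivity it
is everything, contradicting `|V| > 4`.
-/

open SimpleGraph Set

namespace SimpleGraph

variable {V : Type*} {G : SimpleGraph V}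

theorem Preconnected.eq_univ_of_forall_adj_mem (hG : G.Preconnected) {S : Set V} {x : V}
    (hx : x ∈ S) (hS : ∀ s ∈ S, ∀ t, G.Adj s t → t ∈ S) : S = univ := by
  refine eq_univ_of_forall fun t => by_contra fun ht => ?_
  obtain ⟨w⟩ := hG x t
  obtain ⟨d, -, hd, hd'⟩ := w.exists_boundary_dart S hx ht
  exact hd' (hS _ hd _ d.adj)

theorem exists_adj_ne_of_two_le_ncard {v : V} (hv : 2 ≤ (G.neighborSet v).ncard) (u : V) :
    ∃ w, G.Adj v w ∧ w ≠ u :=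
  (G.neighborSet v).exists_ne_of_one_lt_ncard hv u

theorem Subgraph.IsPerfectMatching.exists_involutive_adj {M : G.Subgraph}
    (hM : M.IsPerfectMatching) :
    ∃ p : V → V, Function.Involutive p ∧ ∀ v, M.Adj v (p v) := by
  choose p hp hp_unique using Subgraph.isPerfectMatching_iff.mp hM
  exact ⟨p, fun v => (hp_unique _ _ (hp v).symm).symm, hp⟩

end SimpleGraph

section LinkedPairs

variable {V : Type*} {p : V → V}

theorem Function.Involutive.mem_pair_comm (hp : Function.Involutive p) {x y : V} :
    y ∈ ({x, p x} : Set V) ↔ x ∈ ({y, p y} : Set V) := by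
  grind [Function.Involutive]

/-- The path `p y, y, x, p x, z, p z` runs through three distinct pairs `{v, p v}`, which it joins
by the `G`-edges `yx` and `(p x) z`. -/
def LinksThreePairs (G : SimpleGraph V) (p : V → V) (x y z : V) : Prop :=
  G.Adj y x ∧ G.Adj (p x) z ∧ y ∉ ({x, p x} : Set V) ∧ z ∉ ({x, p x} : Set V) ∧
    z ∉ ({y, p y} : Set V)

variable {G : SimpleGraph V}

theorem LinksThreePairs.nodup (hp : Function.Involutive p) (hfix : ∀ v, p v ≠ v) {x y z : V}
    (h : LinksThreePairs G p x y z) : [p y, y, x, p x, z, p z].Nodup := by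
  obtain ⟨-, -, hy, hzx, hzy⟩ := h
  simp only [mem_insert_iff, mem_singleton_iff, not_or] at hy hzx hzy
  simp only [List.nodup_cons, List.mem_cons, List.not_mem_nil, List.nodup_nil]
  grind [Function.Involutive]

theorem notMem_pair_of_adj {x y : V} (hxy : G.Adj x y) (hy : y ≠ p x) :
    y ∉ ({x, p x} : Set V) := by
  simp only [mem_insert_iff, mem_singleton_iff, not_or]
  exact ⟨hxy.ne.symm, hy⟩

theorem exists_linksThreePairs_of_adj_notMem (hp : Function.Involutive p)
    (hdeg : ∀ v : V, 2 ≤ (G.neighborSet v).ncard) {x y s t : V} (hyx : G.Adj y x)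
    (hy : y ∉ ({x, p x} : Set V)) (hs : s ∈ ({x, p x} : Set V)) (hst : G.Adj s t)
    (ht : t ∉ ({x, p x} ∪ {y, p y} : Set V)) : ∃ x y z, LinksThreePairs G p x y z := by
  obtain ⟨htx, hty⟩ := not_or.mp ht
  rcases hs with hs | hs <;> subst s
  · -- `{x, p x}` becomes the middle pair, linked to `{z, p z}` and to whichever of
    -- `{y, p y}`, `{t, p t}` differs from it
    obtain ⟨z, hxz, hzx⟩ := exists_adj_ne_of_two_le_ncard (hdeg (p x)) x
    have hpair : ({p x, p (p x)} : Set V) = {x, p x} := by rw [hp x, pair_comm]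
    have hz : z ∉ ({p x, p (p x)} : Set V) := notMem_pair_of_adj hxz (by rwa [hp x])
    by_cases hzy : z ∈ ({y, p y} : Set V)
    · refine ⟨p x, z, t, hxz.symm, by rwa [hp x], hz, hpair ▸ htx, ?_⟩
      rcases hzy with rfl | rfl
      · exact hty
      · rwa [hp _, pair_comm]
    · refine ⟨p x, z, y, hxz.symm, by rw [hp x]; exact hyx.symm, hz, hpair ▸ hy, ?_⟩
      exact fun h => hzy (hp.mem_pair_comm.mp h)
  · exact ⟨x, y, t, hyx, hst, hy, htx, hty⟩

theorem exists_linksThreePairs (hp : Function.Involutive p) (hG : G.Preconnected)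
    (hdeg : ∀ v : V, 2 ≤ (G.neighborSet v).ncard) (hcard : 4 < Nat.card V) :
    ∃ x y z, LinksThreePairs G p x y z := by
  by_contra hno
  obtain ⟨x⟩ : Nonempty V := Nat.card_pos_iff.mp (by omega) |>.1
  obtain ⟨y, hxy, hyp⟩ := exists_adj_ne_of_two_le_ncard (hdeg x) (p x)
  have hy : y ∉ ({x, p x} : Set V) := notMem_pair_of_adj hxy hyp
  set S : Set V := {x, p x} ∪ {y, p y} with hS_def
  have hS : ∀ s ∈ S, ∀ t, G.Adj s t → t ∈ S := by
    rintro s (hs | hs) t hst <;> refine by_contra fun ht => hno ?_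
    · exact exists_linksThreePairs_of_adj_notMem hp hdeg hxy.symm hy hs hst ht
    · rw [hS_def, union_comm] at ht
      exact exists_linksThreePairs_of_adj_notMem hp hdeg hxy (mt hp.mem_pair_comm.mpr hy) hs
        hst ht
  have hS_univ : S = univ := hG.eq_univ_of_forall_adj_mem (mem_union_left _ (mem_insert x _)) hS
  have : Nat.card V ≤ 4 := by
    rw [← ncard_univ, ← hS_univ]
    grw [ncard_union_le, ncard_insert_le, ncard_singleton, ncard_insert_le, ncard_singleton]
  omega

end LinkedPairs

theorem three_matching_edges_linked {V : Type*} [Fintype V]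
    (G : SimpleGraph V) (hconn : G.Connected)
    (hdeg : ∀ v : V, 2 ≤ (G.neighborSet v).ncard)
    (M : G.Subgraph) (hM : M.IsPerfectMatching)
    (hcard : 4 < Fintype.card V) :
    ∃ v₁ v₂ v₃ v₄ v₅ v₆ : V,
      ([v₁, v₂, v₃, v₄, v₅, v₆] : List V).Nodup ∧
      M.Adj v₁ v₂ ∧ M.Adj v₃ v₄ ∧ M.Adj v₅ v₆ ∧
      G.Adj v₂ v₃ ∧ G.Adj v₄ v₅ := by
  obtain ⟨p, hp, hMp⟩ := hM.exists_involutive_adj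
  obtain ⟨x, y, z, h⟩ :=
    exists_linksThreePairs hp hconn.preconnected hdeg (by rwa [Nat.card_eq_fintype_card])
  have hfix : ∀ v, p v ≠ v := fun v => (hMp v).ne.symm
  exact ⟨p y, y, x, p x, z, p z, h.nodup hp hfix, (hMp y).symm, hMp x, hMp z, h.1, h.2.1⟩
end
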